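/- For every step size t ∈ (0, 1/β], the proximal gradient map G_t is strongly monotone: for all x, y ∈ ℝ^n, ⟨G_t(x) − G_t(y), x − y⟩ ≥ (α/2)·‖x − y‖². -/

import Mathlib

/-!
The gradient step `z ↦ z - t ∇f z` is a contraction: expanding `‖(x - y) - t (∇f x - ∇f y)‖²`
and using strong monotonicity `α ‖x - y‖² ≤ ⟪∇f x - ∇f y, x - y⟫` together with
co-coercivity `‖∇f x - ∇f y‖² ≤ β ⟪∇f x - ∇f y, x - y⟫` (from the descent lemma) gives the
factor `1 - tα` when `tβ ≤ 1`. The proximal map of a convex function is nonexpansive, since it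
minimizes a `1`-strongly convex function. Hence `x⁺ - y⁺` has squared norm at most
`(1 - tα) ‖x - y‖²`, and `⟪G_t x - G_t y, x - y⟫ = t⁻¹ (‖x - y‖² - ⟪x⁺ - y⁺, x - y⟫)` is bounded
below by `α/2 ‖x - y‖²` via `2 ⟪a, b⟫ ≤ ‖a‖² + ‖b‖²`.
-/

open scoped RealInnerProductSpace
open Set Filter Topology

section Gradient

variable {E : Type*} [NormedAddCommGroup E] [InnerProductSpace ℝ E] [CompleteSpace E]
  {f : E → ℝ}

lemma HasGradientAt.hasDerivAt_comp_add_smul {x d g : E} {s : ℝ}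
    (hf : HasGradientAt f g (x + s • d)) :
    HasDerivAt (fun s : ℝ => f (x + s • d)) ⟪g, d⟫ s := by
  have hline : HasDerivAt (fun s : ℝ => x + s • d) d s := by
    simpa using ((hasDerivAt_id s).smul_const d).const_add x
  have := hf.hasFDerivAt.comp_hasDerivAt s hline
  simp only [Function.comp_def, InnerProductSpace.toDual_apply_apply] at this
  exact this

lemma HasGradientAt.sub_half_mul_norm_sq {x g : E} (hf : HasGradientAt f g x) (m : ℝ) :
    HasGradientAt (fun z => f z - m / 2 * ‖z‖ ^ 2) (g - m • x) x := by
  refine (hf.hasFDerivAt.sub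
    ((hasStrictFDerivAt_norm_sq x).hasFDerivAt.const_mul (m / 2))).congr_fderiv ?_
  ext y
  simp only [sub_apply, InnerProductSpace.toDual_apply_apply,
    smul_apply, coe_innerSL_apply, nsmul_eq_mul, Nat.cast_ofNat,
    smul_eq_mul, map_sub, map_smul, sub_right_inj]
  ring

lemma ConvexOn.add_inner_le_of_hasGradientAt (hf : ConvexOn ℝ univ f) {x g : E}
    (hx : HasGradientAt f g x) (y : E) : f x + ⟪g, y - x⟫ ≤ f y := by
  have hline : ConvexOn ℝ univ (fun s : ℝ => f (x + s • (y - x))) := by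
    simpa [Function.comp_def, AffineMap.lineMap_apply, add_comm] using
      hf.comp_affineMap (AffineMap.lineMap x y)
  have := hline.le_slope_of_hasDerivAt (mem_univ 0) (mem_univ 1) one_pos
    (HasGradientAt.hasDerivAt_comp_add_smul (by simpa using hx))
  simp only [slope_def_field, one_smul, add_sub_cancel, zero_smul, add_zero, sub_zero,
    div_one] at this
  linarith

lemma StrongConvexOn.add_inner_add_le_of_hasGradientAt {m : ℝ} (hf : StrongConvexOn univ m f)
    {x g : E} (hx : HasGradientAt f g x) (y : E) :
    f x + ⟪g, y - x⟫ + m / 2 * ‖y - x‖ ^ 2 ≤ f y := by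
  have := (strongConvexOn_iff_convex.mp hf).add_inner_le_of_hasGradientAt
    (hx.sub_half_mul_norm_sq m) y
  have hsq : ‖y‖ ^ 2 = ‖x‖ ^ 2 + 2 * ⟪x, y - x⟫ + ‖y - x‖ ^ 2 := by
    rw [← norm_add_sq_real, add_sub_cancel]
  rw [inner_sub_left, real_inner_smul_left, hsq] at this
  linarith

lemma StrongConvexOn.mul_norm_sq_le_inner_of_hasGradientAt {m : ℝ}
    (hf : StrongConvexOn univ m f) {x y gx gy : E} (hx : HasGradientAt f gx x)
    (hy : HasGradientAt f gy y) : m * ‖x - y‖ ^ 2 ≤ ⟪gx - gy, x - y⟫ := by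
  have hxy := hf.add_inner_add_le_of_hasGradientAt hx y
  have hyx := hf.add_inner_add_le_of_hasGradientAt hy x
  rw [norm_sub_rev, ← neg_sub x y, inner_neg_right] at hxy
  rw [inner_sub_left]
  linarith

lemma le_add_inner_add_of_lipschitzWith_gradient {g : E → E} {K : NNReal}
    (hf : ∀ z, HasGradientAt f (g z) z) (hg : LipschitzWith K g) (x y : E) :
    f y ≤ f x + ⟪g x, y - x⟫ + K / 2 * ‖y - x‖ ^ 2 := by
  set d := y - x
  let φ : ℝ → ℝ := fun s => f (x + s • d) - s * ⟪g x, d⟫ - K / 2 * s ^ 2 * ‖d‖ ^ 2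
  have hφ : ∀ s, HasDerivAt φ (⟪g (x + s • d), d⟫ - ⟪g x, d⟫ - K * s * ‖d‖ ^ 2) s := by
    intro s
    have hquad := ((hasDerivAt_pow 2 s).const_mul ((K : ℝ) / 2)).mul_const (‖d‖ ^ 2)
    refine (((hf (x + s • d)).hasDerivAt_comp_add_smul.sub
      ((hasDerivAt_id s).mul_const ⟪g x, d⟫)).sub hquad).congr_deriv ?_
    simp only [one_mul]
    ring
  have hφ' : ∀ s ∈ interior (Icc (0 : ℝ) 1), deriv φ s ≤ 0 := by
    intro s hs
    rw [interior_Icc] at hs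
    have hlip : ‖g (x + s • d) - g x‖ ≤ K * (s * ‖d‖) := by
      simpa [dist_eq_norm, norm_smul, abs_of_pos hs.1] using hg.dist_le_mul (x + s • d) x
    have := real_inner_le_norm (g (x + s • d) - g x) d
    rw [(hφ s).deriv, ← inner_sub_left]
    nlinarith [norm_nonneg d]
  have hanti : AntitoneOn φ (Icc 0 1) :=
    antitoneOn_of_deriv_nonpos (convex_Icc 0 1)
      (fun s _ => (hφ s).continuousAt.continuousWithinAt)
      (fun s _ => (hφ s).differentiableAt.differentiableWithinAt) hφ'
  have := hanti (left_mem_Icc.mpr zero_le_one) (right_mem_Icc.mpr zero_le_one) zero_le_one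
  simp only [φ, d, one_smul, zero_smul, add_zero, add_sub_cancel, one_mul, one_pow, mul_one,
    zero_mul, sub_zero] at this
  linarith

lemma ConvexOn.add_inner_add_norm_sq_le_of_lipschitzWith_gradient (hc : ConvexOn ℝ univ f)
    {g : E → E} {K : NNReal} (hK : 0 < K) (hf : ∀ z, HasGradientAt f (g z) z)
    (hg : LipschitzWith K g) (x y : E) :
    f y + ⟪g y, x - y⟫ + ‖g x - g y‖ ^ 2 / (2 * K) ≤ f x := by
  set e := g x - g y
  -- Compare the descent lemma at `x` with the supporting hyperplane at `y`, both at `z`.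
  set z := x - (K : ℝ)⁻¹ • e
  have hdesc := le_add_inner_add_of_lipschitzWith_gradient hf hg x z
  have hsupp := hc.add_inner_le_of_hasGradientAt (hf y) z
  have hK' : (0 : ℝ) < K := hK
  have hzx : z - x = -((K : ℝ)⁻¹ • e) := by simp [z]
  have hzy : z - y = (x - y) - (K : ℝ)⁻¹ • e := by simp only [z]; abel
  rw [hzx, norm_neg, norm_smul, inner_neg_right, real_inner_smul_right,
    Real.norm_of_nonneg (inv_nonneg.mpr hK'.le)] at hdesc
  rw [hzy, inner_sub_right, real_inner_smul_right] at hsupp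
  have he : ⟪g x, e⟫ - ⟪g y, e⟫ = ‖e‖ ^ 2 := by
    rw [← inner_sub_left, real_inner_self_eq_norm_sq]
  field_simp at hdesc hsupp ⊢
  nlinarith

lemma ConvexOn.norm_sq_le_mul_inner_of_lipschitzWith_gradient (hc : ConvexOn ℝ univ f)
    {g : E → E} {K : NNReal} (hK : 0 < K) (hf : ∀ z, HasGradientAt f (g z) z)
    (hg : LipschitzWith K g) (x y : E) :
    ‖g x - g y‖ ^ 2 ≤ K * ⟪g x - g y, x - y⟫ := by
  have hxy := hc.add_inner_add_norm_sq_le_of_lipschitzWith_gradient hK hf hg x y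
  have hyx := hc.add_inner_add_norm_sq_le_of_lipschitzWith_gradient hK hf hg y x
  rw [norm_sub_rev, ← neg_sub x y, inner_neg_right] at hyx
  have hsum : ‖g x - g y‖ ^ 2 / K ≤ ⟪g x - g y, x - y⟫ := by
    have hhalf : ‖g x - g y‖ ^ 2 / (2 * K) + ‖g x - g y‖ ^ 2 / (2 * K)
        = ‖g x - g y‖ ^ 2 / K := by ring
    rw [inner_sub_left]
    linarith
  rwa [div_le_iff₀' (NNReal.coe_pos.mpr hK)] at hsum

lemma StrongConvexOn.norm_sub_smul_gradient_sq_le {g : E → E} {K : NNReal} {α t : ℝ}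
    (hf : StrongConvexOn univ α f) (hα : 0 ≤ α) (hK : 0 < K)
    (hgrad : ∀ z, HasGradientAt f (g z) z) (hg : LipschitzWith K g) (ht : 0 ≤ t)
    (htK : t * K ≤ 1) (x y : E) :
    ‖(x - t • g x) - (y - t • g y)‖ ^ 2 ≤ (1 - t * α) * ‖x - y‖ ^ 2 := by
  have hmono := hf.mul_norm_sq_le_inner_of_hasGradientAt (hgrad x) (hgrad y)
  have hcoco := (strongConvexOn_zero.mp (hf.mono hα)).norm_sq_le_mul_inner_of_lipschitzWith_gradient
    hK hgrad hg x y
  have hrw : (x - t • g x) - (y - t • g y) = (x - y) - t • (g x - g y) := by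
    rw [smul_sub]; abel
  rw [hrw, norm_sub_sq_real, norm_smul, real_inner_smul_right, real_inner_comm, mul_pow,
    Real.norm_of_nonneg ht]
  have hinner : 0 ≤ ⟪g x - g y, x - y⟫ := le_trans (by positivity) hmono
  have hstep : t * (K * ⟪g x - g y, x - y⟫) ≤ ⟪g x - g y, x - y⟫ := by
    rw [← mul_assoc]; exact mul_le_of_le_one_left hinner htK
  nlinarith [mul_le_mul_of_nonneg_left hcoco (mul_nonneg ht ht),
    mul_le_mul_of_nonneg_left hmono ht]

end Gradient

section Prox

variable {E : Type*} [NormedAddCommGroup E] [InnerProductSpace ℝ E]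

lemma StrongConvexOn.add_norm_sq_le_of_isMinOn {ψ : E → ℝ} {m : ℝ}
    (hψ : StrongConvexOn univ m ψ) {p : E} (hp : IsMinOn ψ univ p) (z : E) :
    ψ p + m / 2 * ‖z - p‖ ^ 2 ≤ ψ z := by
  have hseg : ∀ c ∈ Ioc (0 : ℝ) 1, ψ p + (1 - c) * (m / 2 * ‖z - p‖ ^ 2) ≤ ψ z := by
    rintro c ⟨hc0, hc1⟩
    have hmin := isMinOn_iff.mp hp ((1 - c) • p + c • z) (mem_univ _)
    have hconv := hψ.2 (mem_univ p) (mem_univ z) (sub_nonneg.mpr hc1) hc0.le (by ring)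
    simp only [smul_eq_mul, norm_sub_rev p z] at hconv
    have : c * (ψ p + (1 - c) * (m / 2 * ‖z - p‖ ^ 2)) ≤ c * ψ z := by nlinarith
    exact le_of_mul_le_mul_left this hc0
  have hlim : Tendsto (fun c : ℝ => ψ p + (1 - c) * (m / 2 * ‖z - p‖ ^ 2)) (𝓝[>] 0)
      (𝓝 (ψ p + m / 2 * ‖z - p‖ ^ 2)) := by
    have : Continuous (fun c : ℝ => ψ p + (1 - c) * (m / 2 * ‖z - p‖ ^ 2)) := by fun_prop
    simpa using (this.tendsto 0).mono_left nhdsWithin_le_nhds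
  exact le_of_tendsto hlim (eventually_of_mem (Ioc_mem_nhdsGT zero_lt_one) hseg)

lemma ConvexOn.strongConvexOn_add_norm_sub_sq {φ : E → ℝ} (hφ : ConvexOn ℝ univ φ) (v : E) :
    StrongConvexOn univ 1 (fun u => φ u + ‖u - v‖ ^ 2 / 2) := by
  rw [strongConvexOn_iff_convex]
  refine (hφ.add (((-innerₗ E v).convexOn convex_univ).add_const (‖v‖ ^ 2 / 2))).congr
    fun u _ => ?_
  simp only [Pi.add_apply, LinearMap.neg_apply, innerₗ_apply_apply, norm_sub_sq_real,
    real_inner_comm]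
  ring

/-- `P = Prox_φ`; with `φ = t h` this is the proximal map `Prox_{th}`. -/
def IsProxMap (φ : E → ℝ) (P : E → E) : Prop :=
  ∀ v, IsMinOn (fun u => φ u + ‖u - v‖ ^ 2 / 2) univ (P v)

lemma IsProxMap.norm_sq_le_inner {φ : E → ℝ} {P : E → E} (hP : IsProxMap φ P)
    (hφ : ConvexOn ℝ univ φ) (u v : E) : ‖P u - P v‖ ^ 2 ≤ ⟪P u - P v, u - v⟫ := by
  have hu := (hφ.strongConvexOn_add_norm_sub_sq u).add_norm_sq_le_of_isMinOn (hP u) (P v)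
  have hv := (hφ.strongConvexOn_add_norm_sub_sq v).add_norm_sq_le_of_isMinOn (hP v) (P u)
  have hid : ‖P v - u‖ ^ 2 + ‖P u - v‖ ^ 2 - ‖P u - u‖ ^ 2 - ‖P v - v‖ ^ 2
      = 2 * ⟪P u - P v, u - v⟫ := by
    simp only [norm_sub_sq_real, inner_sub_left, inner_sub_right, real_inner_comm u (P v),
      real_inner_comm v (P u)]
    ring
  rw [norm_sub_rev (P v)] at hu
  linarith

lemma IsProxMap.norm_sub_le {φ : E → ℝ} {P : E → E} (hP : IsProxMap φ P)
    (hφ : ConvexOn ℝ univ φ) (u v : E) : ‖P u - P v‖ ≤ ‖u - v‖ := by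
  have h := (hP.norm_sq_le_inner hφ u v).trans (real_inner_le_norm _ _)
  rw [sq] at h
  rcases (norm_nonneg (P u - P v)).eq_or_lt with h0 | h0
  · rw [← h0]; exact norm_nonneg _
  · exact le_of_mul_le_mul_left h h0

lemma half_mul_norm_sq_le_inner_of_norm_sq_le {x y p q : E} {t α : ℝ} (ht : 0 < t)
    (hpq : ‖p - q‖ ^ 2 ≤ (1 - t * α) * ‖x - y‖ ^ 2) :
    α / 2 * ‖x - y‖ ^ 2 ≤ ⟪t⁻¹ • (x - p) - t⁻¹ • (y - q), x - y⟫ := by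
  have hsplit : t⁻¹ • (x - p) - t⁻¹ • (y - q) = t⁻¹ • ((x - y) - (p - q)) := by
    rw [← smul_sub]; congr 1; abel
  have hpq' : ⟪p - q, x - y⟫ ≤ (1 - t * α / 2) * ‖x - y‖ ^ 2 := by
    nlinarith [real_inner_le_norm (p - q) (x - y), sq_nonneg (‖p - q‖ - ‖x - y‖)]
  rw [hsplit, real_inner_smul_left, inner_sub_left, real_inner_self_eq_norm_sq,
    le_inv_mul_iff₀ ht]
  linarith

end Prox

theorem stmt_8_general (n : ℕ) (α β t : ℝ) (hα : 0 < α)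
    (f h : EuclideanSpace ℝ (Fin n) → ℝ)
    (hsc : ConvexOn ℝ Set.univ (fun z => f z - α / 2 * ‖z‖ ^ 2))
    (hf : Differentiable ℝ f)
    (hlip : LipschitzWith β.toNNReal (fun z => gradient f z))
    (hconv : ConvexOn ℝ Set.univ h)
    (ht : t ∈ Set.Ioc (0 : ℝ) (1 / β))
    (P : EuclideanSpace ℝ (Fin n) → EuclideanSpace ℝ (Fin n))
    (hP : ∀ v, IsMinOn (fun u => t * h u + ‖u - v‖ ^ 2 / 2) Set.univ (P v)) :
    ∀ x y : EuclideanSpace ℝ (Fin n),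
      ⟪t⁻¹ • (x - P (x - t • gradient f x)) - t⁻¹ • (y - P (y - t • gradient f y)), x - y⟫
        ≥ α / 2 * ‖x - y‖ ^ 2 := by
  intro x y
  obtain ⟨ht0, htβ⟩ := ht
  have hβ : 0 < β := one_div_pos.mp (ht0.trans_le htβ)
  have htK : t * β.toNNReal ≤ 1 := by
    rw [Real.coe_toNNReal _ hβ.le]
    exact (le_div_iff₀ hβ).mp htβ
  have hstep := (strongConvexOn_iff_convex.mpr hsc).norm_sub_smul_gradient_sq_le hα.le
    (Real.toNNReal_pos.mpr hβ) (fun z => (hf z).hasGradientAt) hlip ht0.le htK x y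
  have hprox := IsProxMap.norm_sub_le (φ := fun u => t * h u) hP (hconv.smul ht0.le)
    (x - t • gradient f x) (y - t • gradient f y)
  exact half_mul_norm_sq_le_inner_of_norm_sq_le ht0
    ((pow_le_pow_left₀ (norm_nonneg _) hprox 2).trans hstep)

/-- strong monotonicity of the proximal gradient map `G_t`, where
`G_t(z) = (z − z⁺)/t`, `z⁺ = P (z − t∇f(z))` and `P v = Prox_{th}(v)` is the
minimizer of `u ↦ t·h(u) + ½‖u − v‖²`. -/
theorem stmt_8 (n : ℕ) (α β t : ℝ) (hα : 0 < α) (hαβ : α ≤ β)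
    (f h : EuclideanSpace ℝ (Fin n) → ℝ)
    (hsc : ConvexOn ℝ Set.univ (fun z => f z - α / 2 * ‖z‖ ^ 2))
    (hf : Differentiable ℝ f)
    (hlip : LipschitzWith β.toNNReal (fun z => gradient f z))
    (hconv : ConvexOn ℝ Set.univ h) (hlsc : LowerSemicontinuous h)
    (ht : t ∈ Set.Ioc (0 : ℝ) (1 / β))
    (P : EuclideanSpace ℝ (Fin n) → EuclideanSpace ℝ (Fin n))
    (hP : ∀ v, IsMinOn (fun u => t * h u + ‖u - v‖ ^ 2 / 2) Set.univ (P v)) :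
    ∀ x y : EuclideanSpace ℝ (Fin n),
      ⟪t⁻¹ • (x - P (x - t • gradient f x)) - t⁻¹ • (y - P (y - t • gradient f y)), x - y⟫
        ≥ α / 2 * ‖x - y‖ ^ 2 :=
  stmt_8_general n α β t hα f h hsc hf hlip hconv ht P hP
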